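/- Let T be a butterfly with head v. Then v is wanted in T: v belongs to every strong stable set of T. -/
import Mathlib


open SimpleGraph

section Defs

variable {V : Type*}

/-- A stable (independent) set of a graph. -/
def IsStable (G : SimpleGraph V) (S : Set V) : Prop :=
  ∀ ⦃u v : V⦄, u ∈ S → v ∈ S → ¬ G.Adj u v

/-- `C` is a maximal clique of the induced subgraph `G[W]`. -/
def IsMaxCliqueOn (G : SimpleGraph V) (W C : Set V) : Prop :=
  C ⊆ W ∧ G.IsClique C ∧ ∀ D : Set V, D ⊆ W → G.IsClique D → C ⊆ D → D = C

/-- `C` is a maximal clique of `G`. -/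
def IsMaxClique (G : SimpleGraph V) (C : Set V) : Prop :=
  G.IsClique C ∧ ∀ D : Set V, G.IsClique D → C ⊆ D → D = C

/-- `S` is a strong stable set of the induced subgraph `G[W]`. -/
def StrongStableOn (G : SimpleGraph V) (W S : Set V) : Prop :=
  S ⊆ W ∧ IsStable G S ∧ ∀ C : Set V, IsMaxCliqueOn G W C → C.Nonempty → (S ∩ C).Nonempty

/-- `S` is a strong stable set of `G`. -/
def StrongStable (G : SimpleGraph V) (S : Set V) : Prop :=
  IsStable G S ∧ ∀ C : Set V, IsMaxClique G C → C.Nonempty → (S ∩ C).Nonempty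

/-- The induced subgraph `G[W]` is strongly perfect. -/
def StronglyPerfectOn (G : SimpleGraph V) (W : Set V) : Prop :=
  ∀ U : Set V, U ⊆ W → ∃ S : Set V, StrongStableOn G U S

/-- `G` is strongly perfect: every induced subgraph has a strong stable set. -/
def StronglyPerfect (G : SimpleGraph V) : Prop :=
  ∀ U : Set V, ∃ S : Set V, StrongStableOn G U S

/-- `G` is minimal non-strongly-perfect. -/
def MinimalNSP (G : SimpleGraph V) : Prop :=
  ¬ StronglyPerfect G ∧ ∀ W : Set V, W ≠ Set.univ → StronglyPerfectOn G W

end Defs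

/-- Vertices of a butterfly with path-lengths `α = |P₁|`, `β = |P₂|`, `γ = |P₃|`:
`none` is the head `v`, and `some i` is the `i`-th vertex of the induced path
`a_1-…-a_k(=b_1)-…-b_ℓ(=c_1)-…-c_m` of total length `α+β+γ`. -/
abbrev ButterflyV (a b c : ℕ) := Option (Fin (a + b + c + 1))

/-- The butterfly: the head `v` is complete to `P₂ ∪ {a_1, c_m}`, i.e. to the path
vertices with index `0`, `α+β+γ`, or in `[α, α+β]`, and no other edges. -/
def butterflyRel (a b c : ℕ) : ButterflyV a b c → ButterflyV a b c → Prop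
  | some i, some j => (j : ℕ) = (i : ℕ) + 1
  | none, some i => (i : ℕ) = 0 ∨ (i : ℕ) = a + b + c ∨ (a ≤ (i : ℕ) ∧ (i : ℕ) ≤ a + b)
  | _, _ => False

def butterfly (a b c : ℕ) : SimpleGraph (ButterflyV a b c) :=
  SimpleGraph.fromRel (butterflyRel a b c)

lemma bf_adj_some_some {a b c : ℕ} {i j : Fin (a+b+c+1)} :
    (butterfly a b c).Adj (some i) (some j) ↔ ((j:ℕ) = (i:ℕ)+1 ∨ (i:ℕ) = (j:ℕ)+1) := by
  rw [butterfly, SimpleGraph.fromRel_adj]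
  show (some i ≠ some j ∧ (((j:ℕ) = (i:ℕ)+1) ∨ ((i:ℕ) = (j:ℕ)+1))) ↔ _
  constructor
  · rintro ⟨-, h⟩; exact h
  · intro h
    refine ⟨fun he => ?_, h⟩
    injection he with he
    subst he
    rcases h with h | h <;> omega

lemma bf_adj_none_some {a b c : ℕ} {i : Fin (a+b+c+1)} :
    (butterfly a b c).Adj none (some i) ↔
      ((i:ℕ) = 0 ∨ (i:ℕ) = a+b+c ∨ (a ≤ (i:ℕ) ∧ (i:ℕ) ≤ a+b)) := by
  rw [butterfly, SimpleGraph.fromRel_adj]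
  show ((none : ButterflyV a b c) ≠ some i ∧ (_ ∨ False)) ↔ _
  simp [butterflyRel]

lemma bf_adj_some_none {a b c : ℕ} {i : Fin (a+b+c+1)} :
    (butterfly a b c).Adj (some i) none ↔
      ((i:ℕ) = 0 ∨ (i:ℕ) = a+b+c ∨ (a ≤ (i:ℕ) ∧ (i:ℕ) ≤ a+b)) := by
  rw [adj_comm]; exact bf_adj_none_some

/-- helper: extract nat inequality from `some j ≠ some ⟨n, _⟩`. -/
lemma bf_ne_val {a b c : ℕ} {j : Fin (a+b+c+1)} {n : ℕ} {h : n < a+b+c+1}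
    (hne : (some j : ButterflyV a b c) ≠ some ⟨n, h⟩) : (j : ℕ) ≠ n := by
  intro he; exact hne (by congr 1; exact Fin.ext he)

lemma bf_maxclique_edge {a b c : ℕ} (i : ℕ) (hi1 : i + 1 ≤ a + b + c)
    (hna : ¬ ((i = 0 ∨ i = a+b+c ∨ (a ≤ i ∧ i ≤ a+b)) ∧
              (i+1 = 0 ∨ i+1 = a+b+c ∨ (a ≤ i+1 ∧ i+1 ≤ a+b)))) :
    IsMaxClique (butterfly a b c)
      {some ⟨i, by omega⟩, some ⟨i+1, by omega⟩} := by
  constructor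
  · rw [SimpleGraph.isClique_pair]
    intro _
    rw [bf_adj_some_some]; left; rfl
  · intro D hD hsub
    refine Set.Subset.antisymm (fun x hx => ?_) hsub
    by_contra hxC
    simp only [Set.mem_insert_iff, Set.mem_singleton_iff, not_or] at hxC
    obtain ⟨h1, h2⟩ := hxC
    have hA := hD hx (hsub (by simp)) h1
    have hB := hD hx (hsub (by simp)) h2
    match x with
    | none =>
      rw [bf_adj_none_some] at hA hB
      exact hna ⟨hA, hB⟩
    | some j =>
      rw [bf_adj_some_some] at hA hB
      have n1 := bf_ne_val h1
      have n2 := bf_ne_val h2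
      simp only [] at hA hB
      omega

lemma bf_maxclique_tri {a b c : ℕ} (i : ℕ) (hi1 : i + 1 ≤ a + b + c)
    (hai : a ≤ i) (hib : i + 1 ≤ a + b) :
    IsMaxClique (butterfly a b c)
      {none, some ⟨i, by omega⟩, some ⟨i+1, by omega⟩} := by
  constructor
  · intro x hx y hy hne
    simp only [Set.mem_insert_iff, Set.mem_singleton_iff] at hx hy
    rcases hx with rfl | rfl | rfl <;> rcases hy with rfl | rfl | rfl
    · exact absurd rfl hne
    · rw [bf_adj_none_some]; simp only [Fin.val_mk]; omega
    · rw [bf_adj_none_some]; simp only [Fin.val_mk]; omega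
    · rw [bf_adj_some_none]; simp only [Fin.val_mk]; omega
    · exact absurd rfl hne
    · rw [bf_adj_some_some]; left; rfl
    · rw [bf_adj_some_none]; simp only [Fin.val_mk]; omega
    · rw [bf_adj_some_some]; right; rfl
    · exact absurd rfl hne
  · intro D hD hsub
    refine Set.Subset.antisymm (fun x hx => ?_) hsub
    by_contra hxC
    simp only [Set.mem_insert_iff, Set.mem_singleton_iff, not_or] at hxC
    obtain ⟨h0, h1, h2⟩ := hxC
    match x with
    | none => exact h0 rfl
    | some j =>
      have hA := hD hx (hsub (by simp)) h1
      have hB := hD hx (hsub (by simp)) h2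
      rw [bf_adj_some_some] at hA hB
      have n1 := bf_ne_val h1
      have n2 := bf_ne_val h2
      simp only [] at hA hB
      omega

lemma bf_maxclique_v0 {a b c : ℕ} (ha2 : 2 ≤ a) :
    IsMaxClique (butterfly a b c) {none, some ⟨0, by omega⟩} := by
  constructor
  · rw [SimpleGraph.isClique_pair]
    intro _
    rw [bf_adj_none_some]; left; rfl
  · intro D hD hsub
    refine Set.Subset.antisymm (fun x hx => ?_) hsub
    by_contra hxC
    simp only [Set.mem_insert_iff, Set.mem_singleton_iff, not_or] at hxC
    obtain ⟨h0, h1⟩ := hxC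
    match x with
    | none => exact h0 rfl
    | some j =>
      have hA := hD hx (hsub (by simp)) h1
      have hB := hD hx (hsub (by simp)) h0
      rw [bf_adj_some_some] at hA
      rw [bf_adj_some_none] at hB
      have n1 := bf_ne_val h1
      simp only [] at hA
      omega

lemma bf_maxclique_vN {a b c : ℕ} (ha2 : 2 ≤ a) (hc2 : 2 ≤ c) :
    IsMaxClique (butterfly a b c) {none, some ⟨a+b+c, by omega⟩} := by
  constructor
  · rw [SimpleGraph.isClique_pair]
    intro _
    rw [bf_adj_none_some]; right; left; rfl
  · intro D hD hsub
    refine Set.Subset.antisymm (fun x hx => ?_) hsub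
    by_contra hxC
    simp only [Set.mem_insert_iff, Set.mem_singleton_iff, not_or] at hxC
    obtain ⟨h0, h1⟩ := hxC
    match x with
    | none => exact h0 rfl
    | some j =>
      have hA := hD hx (hsub (by simp)) h1
      have hB := hD hx (hsub (by simp)) h0
      rw [bf_adj_some_some] at hA
      rw [bf_adj_some_none] at hB
      have n1 := bf_ne_val h1
      have hj := j.isLt
      simp only [] at hA
      omega

theorem butterfly_head_wanted (a b c : ℕ) (ha2 : 2 ≤ a) (hae : Even a)
    (hbo : Odd b) (hc2 : 2 ≤ c) (hce : Even c)
    (S : Set (ButterflyV a b c)) (hS : StrongStable (butterfly a b c) S) :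
    none ∈ S := by
  by_contra hv
  obtain ⟨hst, hmax⟩ := hS
  obtain ⟨s, hs⟩ := hae
  obtain ⟨t, ht⟩ := hbo
  obtain ⟨u, hu⟩ := hce
  -- Left claim: even vertices up to a+b-1 are in S
  have claim1 : ∀ k : ℕ, ∀ _ : 2*k + 1 ≤ a + b,
      some (⟨2*k, by omega⟩ : Fin (a+b+c+1)) ∈ S := by
    intro k
    induction k with
    | zero =>
      intro h
      obtain ⟨x, hxS, hxC⟩ := hmax _ (bf_maxclique_v0 (b := b) (c := c) ha2)
        ⟨none, Set.mem_insert _ _⟩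
      simp only [Set.mem_insert_iff, Set.mem_singleton_iff] at hxC
      rcases hxC with rfl | rfl
      · exact absurd hxS hv
      · exact hxS
    | succ k ih =>
      intro h
      have hk := ih (by omega)
      by_cases hca : a ≤ 2*k+1
      · have hC := bf_maxclique_tri (a := a) (b := b) (c := c) (2*k+1)
          (by omega) hca (by omega)
        obtain ⟨x, hxS, hxC⟩ := hmax _ hC ⟨none, Set.mem_insert _ _⟩
        simp only [Set.mem_insert_iff, Set.mem_singleton_iff] at hxC
        rcases hxC with rfl | rfl | rfl
        · exact absurd hxS hv
        · exact absurd (bf_adj_some_some.mpr (Or.inl rfl)) (hst hk hxS)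
        · exact hxS
      · have hC := bf_maxclique_edge (a := a) (b := b) (c := c) (2*k+1)
          (by omega) (by omega)
        obtain ⟨x, hxS, hxC⟩ := hmax _ hC ⟨_, Set.mem_insert _ _⟩
        simp only [Set.mem_insert_iff, Set.mem_singleton_iff] at hxC
        rcases hxC with rfl | rfl
        · exact absurd (bf_adj_some_some.mpr (Or.inl rfl)) (hst hk hxS)
        · exact hxS
  -- Right claim: even-distance vertices from the right end down to a+b are in S
  have claim2 : ∀ k : ℕ, ∀ _ : 2*k ≤ c,
      some (⟨a+b+c - 2*k, by omega⟩ : Fin (a+b+c+1)) ∈ S := by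
    intro k
    induction k with
    | zero =>
      intro h
      obtain ⟨x, hxS, hxC⟩ := hmax _ (bf_maxclique_vN (b := b) ha2 hc2)
        ⟨none, Set.mem_insert _ _⟩
      simp only [Set.mem_insert_iff, Set.mem_singleton_iff] at hxC
      rcases hxC with rfl | rfl
      · exact absurd hxS hv
      · exact hxS
    | succ k ih =>
      intro h
      have hk := ih (by omega)
      have hC := bf_maxclique_edge (a := a) (b := b) (c := c) (a+b+c-2*k-2)
        (by omega) (by omega)
      obtain ⟨x, hxS, hxC⟩ := hmax _ hC ⟨_, Set.mem_insert _ _⟩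
      simp only [Set.mem_insert_iff, Set.mem_singleton_iff] at hxC
      rcases hxC with rfl | rfl
      · have hfe : (some ⟨a+b+c-2*(k+1), by omega⟩ : ButterflyV a b c)
            = some ⟨a+b+c-2*k-2, by omega⟩ := by
          simp only [Option.some.injEq, Fin.mk.injEq]
          omega
        rw [hfe]; exact hxS
      · exact absurd
          (bf_adj_some_some.mpr (by simp only [Fin.val_mk]; omega))
          (hst hxS hk)
  have sab1 := claim1 (s+t) (by omega)
  have sab := claim2 u (by omega)
  exact (hst sab1 sab)
    (bf_adj_some_some.mpr (by simp only [Fin.val_mk]; omega))
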